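/- arXiv:2511.05837 — 8 statements merged into one kernel-verified Lean document; each statement's English description precedes it below -/
import Mathlib

section
/- Fix a ∈ ℝ². The map from (0,∞) × ℝ to ℝ² sending (q,r) to push_{ℓ(q,r)}(a) is continuous. -/
/-- The line in `ℝ²` with slope `q` and intercept `r`. -/
def line (q r : ℝ) : Set (ℝ × ℝ) := {p | p.2 = q * p.1 + r}

/-! On a line of positive slope both coordinates increase with the abscissa, so a point
`(x, q x + r)` of `ℓ(q,r)` lies above `a` exactly when `x ≥ a.1` and `x ≥ (a.2 - r) / q`.
The push of `a` is therefore the point with abscissa `max a.1 ((a.2 - r) / q)`, which is an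
explicit continuous function of `(q, r)` on `q > 0`. -/

def linePoint (q r x : ℝ) : ℝ × ℝ := (x, q * x + r)

lemma eq_linePoint_of_mem_line {q r : ℝ} {b : ℝ × ℝ} (hb : b ∈ line q r) :
    b = linePoint q r b.1 :=
  Prod.ext rfl hb

lemma monotone_linePoint {q : ℝ} (hq : 0 ≤ q) (r : ℝ) : Monotone (linePoint q r) :=
  fun _ _ hxy => ⟨hxy, by dsimp [linePoint]; gcongr⟩

noncomputable def pushAbscissa (a : ℝ × ℝ) (q r : ℝ) : ℝ := max a.1 ((a.2 - r) / q)

lemma le_linePoint_iff {a : ℝ × ℝ} {q : ℝ} (hq : 0 < q) (r x : ℝ) :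
    a ≤ linePoint q r x ↔ pushAbscissa a q r ≤ x := by
  rw [pushAbscissa, max_le_iff, div_le_iff₀ hq, Prod.le_def]
  dsimp [linePoint]
  constructor <;> rintro ⟨h₁, h₂⟩ <;> exact ⟨h₁, by linarith⟩

lemma isLeast_linePoint_pushAbscissa (a : ℝ × ℝ) {q : ℝ} (hq : 0 < q) (r : ℝ) :
    IsLeast {b ∈ line q r | a ≤ b} (linePoint q r (pushAbscissa a q r)) := by
  refine ⟨⟨rfl, (le_linePoint_iff hq r _).2 le_rfl⟩, ?_⟩
  rintro b ⟨hb, hab⟩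
  rw [eq_linePoint_of_mem_line hb] at hab ⊢
  exact monotone_linePoint hq.le r ((le_linePoint_iff hq r _).1 hab)

lemma continuousOn_pushAbscissa (a : ℝ × ℝ) :
    ContinuousOn (fun p : ℝ × ℝ => pushAbscissa a p.1 p.2) {p | 0 < p.1} :=
  continuousOn_const.sup <|
    (continuous_const.sub continuous_snd).continuousOn.div continuousOn_fst
      fun _ hp => hp.ne'

lemma continuousOn_linePoint_pushAbscissa (a : ℝ × ℝ) :
    ContinuousOn (fun p : ℝ × ℝ => linePoint p.1 p.2 (pushAbscissa a p.1 p.2)) {p | 0 < p.1} :=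
  have hx := continuousOn_pushAbscissa a
  hx.prodMk ((continuousOn_fst.mul hx).add continuousOn_snd)

/-- Fix `a ∈ ℝ²`.  The map sending `(q,r) ∈ (0,∞) × ℝ` to the push of `a`
onto the line `ℓ(q,r)` (the least element, in the product order, of the set of points of
the line above `a`) is continuous. -/
theorem push_continuous (a : ℝ × ℝ) (push : ℝ × ℝ → ℝ × ℝ)
    (hpush : ∀ p : ℝ × ℝ, 0 < p.1 → IsLeast {b ∈ line p.1 p.2 | a ≤ b} (push p)) :
    ContinuousOn push {p : ℝ × ℝ | 0 < p.1} :=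
  (continuousOn_linePoint_pushAbscissa a).congr fun p hp =>
    (hpush p hp).unique (isLeast_linePoint_pushAbscissa a hp p.2)
end

section
/- Let q, r ∈ ℝ with q > 0, and let X ⊆ ℝ² be a finite nonempty set. Then push_{ℓ(q,r)}(⋁X) = max_{x ∈ X} push_{ℓ(q,r)}(x), where ⋁X denotes the join (componentwise supremum) of X in ℝ² and the maximum on the right is taken with respect to the product order, under which the set {push_{ℓ(q,r)}(x) : x ∈ X} ⊆ ℓ(q,r) is totally ordered. -/
theorem IsChain.exists_isGreatest_of_finite {α : Type*} [Preorder α] {s : Set α}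
    (hc : IsChain (· ≤ ·) s) (hfin : s.Finite) (hne : s.Nonempty) : ∃ a, IsGreatest s a := by
  obtain ⟨m, hm⟩ := hfin.exists_maximal hne
  refine ⟨m, hm.prop, fun b hb => ?_⟩
  rcases hc.total hb hm.prop with hbm | hmb
  · exact hbm
  · exact hm.le_of_ge hb hmb

theorem line_le_of_fst_le {q r : ℝ} (hq : 0 ≤ q) {a b : ℝ × ℝ} (ha : a ∈ line q r)
    (hb : b ∈ line q r) (h : a.1 ≤ b.1) : a ≤ b := by
  refine Prod.le_def.2 ⟨h, ?_⟩
  rw [ha, hb]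
  gcongr

theorem isChain_line {q : ℝ} (hq : 0 ≤ q) (r : ℝ) : IsChain (· ≤ ·) (line q r) :=
  fun a ha b hb _ => (le_total a.1 b.1).imp (line_le_of_fst_le hq ha hb)
    (line_le_of_fst_le hq hb ha)

section LeastAbove

variable {α : Type*} {S : Set α} {f : α → α}

theorem monotone_of_forall_isLeast [Preorder α] (hf : ∀ x, IsLeast {b ∈ S | x ≤ b} (f x)) :
    Monotone f :=
  fun _ b hab => (hf _).2 ⟨(hf b).1.1, hab.trans (hf b).1.2⟩

theorem isGreatest_image_sup'_of_forall_isLeast [SemilatticeSup α]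
    (hf : ∀ x, IsLeast {b ∈ S | x ≤ b} (f x)) (hS : IsChain (· ≤ ·) S) (X : Finset α)
    (hX : X.Nonempty) : IsGreatest (f '' X) (f (X.sup' hX id)) := by
  have himage : f '' X ⊆ S :=
    (Set.image_subset_range _ _).trans (Set.range_subset_iff.2 fun x => (hf x).1.1)
  obtain ⟨_, ⟨x₀, hx₀, rfl⟩, hx₀_max⟩ := (hS.mono himage).exists_isGreatest_of_finite
    (X.finite_toSet.image f) ((Finset.coe_nonempty.2 hX).image f)
  have hsup_le : f (X.sup' hX id) ≤ f x₀ :=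
    (hf _).2 ⟨(hf x₀).1.1, Finset.sup'_le _ _ fun x hx =>
      (hf x).1.2.trans (hx₀_max ⟨x, hx, rfl⟩)⟩
  have hle_sup : f x₀ ≤ f (X.sup' hX id) :=
    monotone_of_forall_isLeast hf (X.le_sup' id hx₀)
  rw [le_antisymm hsup_le hle_sup]
  exact ⟨⟨x₀, hx₀, rfl⟩, hx₀_max⟩

end LeastAbove

/-- For `q > 0` and a finite nonempty `X ⊆ ℝ²`, the push of the join
(componentwise supremum) of `X` onto `ℓ(q,r)` is the maximum, in the product order,
of the pushes of the elements of `X`. -/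
theorem push_join_eq_max_push (q r : ℝ) (hq : 0 < q) (push : ℝ × ℝ → ℝ × ℝ)
    (hpush : ∀ x : ℝ × ℝ, IsLeast {b ∈ line q r | x ≤ b} (push x))
    (X : Finset (ℝ × ℝ)) (hX : X.Nonempty) :
    IsGreatest (push '' ↑X) (push (X.sup' hX id)) :=
  isGreatest_image_sup'_of_forall_isLeast hpush (isChain_line hq.le r) X hX
end

section
/- Let S ⊆ ℝ² be finite and let q, r ∈ ℝ with q > 0. Suppose the line ℓ(q,r) contains no anchor of S. Then there exists ε > 0 such that for all (q',r') ∈ (0,∞) × ℝ with |q' − q| < ε and |r' − r| < ε, and for all s, t ∈ S: push_{ℓ(q,r)}(s) ≤ push_{ℓ(q,r)}(t) if and only if push_{ℓ(q',r')}(s) ≤ push_{ℓ(q',r')}(t) (where ≤ is the product order, which is total on each line). -/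
/-- Two distinct points of `ℝ²` are weakly incomparable if they are incomparable in the
product order or share a coordinate. -/
def WeaklyIncomparable (s t : ℝ × ℝ) : Prop :=
  s ≠ t ∧ ((¬ s ≤ t ∧ ¬ t ≤ s) ∨ s.1 = t.1 ∨ s.2 = t.2)

/-- `α` is an anchor of the finite set `S ⊆ ℝ²` if it is the join of a weakly
incomparable pair of elements of `S`. -/
def IsAnchor (S : Finset (ℝ × ℝ)) (α : ℝ × ℝ) : Prop :=
  ∃ s ∈ S, ∃ t ∈ S, WeaklyIncomparable s t ∧ α = s ⊔ t

/-!
The push of `a` onto `ℓ(q,r)` has abscissa `max a₁ ((a₂ - r) / q)`: it moves `a` vertically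
when `a` lies below the line and horizontally when it lies above. Along the line the product
order is the order of abscissae, and these depend continuously on `(q, r)`, so strict
inequalities between pushes persist under small perturbations. A tie between distinct `s, t`
survives as well when both move vertically from a common abscissa or both horizontally from a
common height, since the regime of each point is an open condition. In the remaining case one
moves vertically and the other horizontally onto the same point `p`; then `s ∨ t = p` lies on the
line and `s, t` are weakly incomparable, so `p` is an anchor.
-/

open Filter Topology

lemma eventually_le_iff_of_continuousAt {X α : Type*} [TopologicalSpace X] [TopologicalSpace α]
    [LinearOrder α] [OrderClosedTopology α] {f g : X → α} {x₀ : X}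
    (hf : ContinuousAt f x₀) (hg : ContinuousAt g x₀)
    (heq : f x₀ = g x₀ → ∀ᶠ x in 𝓝 x₀, f x = g x) :
    ∀ᶠ x in 𝓝 x₀, (f x₀ ≤ g x₀ ↔ f x ≤ g x) := by
  rcases lt_trichotomy (f x₀) (g x₀) with h | h | h
  · filter_upwards [hf.eventually_lt hg h] with x hx using iff_of_true h.le hx.le
  · filter_upwards [heq h] with x hx using iff_of_true h.le hx.le
  · filter_upwards [hg.eventually_lt hf h] with x hx using iff_of_false h.not_ge hx.not_ge

lemma WeaklyIncomparable.symm {s t : ℝ × ℝ} (h : WeaklyIncomparable s t) :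
    WeaklyIncomparable t s := by
  obtain ⟨hne, ⟨hst, hts⟩ | h1 | h2⟩ := h
  exacts [⟨hne.symm, .inl ⟨hts, hst⟩⟩, ⟨hne.symm, .inr (.inl h1.symm)⟩,
    ⟨hne.symm, .inr (.inr h2.symm)⟩]

lemma weaklyIncomparable_of_le_of_le {s t : ℝ × ℝ} (hne : s ≠ t) (h1 : t.1 ≤ s.1)
    (h2 : s.2 ≤ t.2) : WeaklyIncomparable s t := by
  refine ⟨hne, ?_⟩
  rcases h1.eq_or_lt with h1 | h1
  · exact .inr (.inl h1.symm)
  rcases h2.eq_or_lt with h2 | h2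
  · exact .inr (.inr h2)
  · exact .inl ⟨fun h => h.1.not_gt h1, fun h => h.2.not_gt h2⟩

noncomputable def pushX (q r : ℝ) (a : ℝ × ℝ) : ℝ := max a.1 ((a.2 - r) / q)

section pushX

variable {q r : ℝ} {s t : ℝ × ℝ}

lemma isLeast_pushX (hq : 0 < q) (a : ℝ × ℝ) :
    IsLeast {b ∈ line q r | a ≤ b} (pushX q r a, q * pushX q r a + r) := by
  refine ⟨⟨rfl, le_max_left _ _, ?_⟩, ?_⟩
  · have : a.2 - r ≤ q * pushX q r a := (div_le_iff₀' hq).mp (le_max_right _ _)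
    dsimp only
    linarith
  · rintro b ⟨hb, ha1, ha2⟩
    have hb : b.2 = q * b.1 + r := hb
    have hx : pushX q r a ≤ b.1 := max_le ha1 ((div_le_iff₀' hq).mpr (by linarith))
    exact ⟨hx, by rw [hb]; dsimp only; gcongr⟩

lemma push_le_push_iff (hq : 0 < q) {ps pt : ℝ × ℝ}
    (hs : IsLeast {b ∈ line q r | s ≤ b} ps) (ht : IsLeast {b ∈ line q r | t ≤ b} pt) :
    ps ≤ pt ↔ pushX q r s ≤ pushX q r t := by
  rw [hs.unique (isLeast_pushX hq s), ht.unique (isLeast_pushX hq t), Prod.mk_le_mk]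
  exact and_iff_left_of_imp fun h => by gcongr

lemma continuousAt_sub_snd_div_fst (hq : q ≠ 0) (y : ℝ) :
    ContinuousAt (fun p : ℝ × ℝ => (y - p.2) / p.1) (q, r) :=
  (continuousAt_const.sub continuousAt_snd).div continuousAt_fst hq

lemma continuousAt_pushX (hq : q ≠ 0) (a : ℝ × ℝ) :
    ContinuousAt (fun p : ℝ × ℝ => pushX p.1 p.2 a) (q, r) :=
  continuousAt_const.max (continuousAt_sub_snd_div_fst hq a.2)

lemma eventually_pushX_eq_fst (hq : q ≠ 0) {a : ℝ × ℝ} (ha : (a.2 - r) / q < a.1) :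
    ∀ᶠ p : ℝ × ℝ in 𝓝 (q, r), pushX p.1 p.2 a = a.1 := by
  filter_upwards [(continuousAt_sub_snd_div_fst hq a.2).eventually_lt continuousAt_const ha]
    with p hp using max_eq_left hp.le

lemma eventually_pushX_eq_div (hq : q ≠ 0) {a : ℝ × ℝ} (ha : a.1 < (a.2 - r) / q) :
    ∀ᶠ p : ℝ × ℝ in 𝓝 (q, r), pushX p.1 p.2 a = (a.2 - p.2) / p.1 := by
  filter_upwards [continuousAt_const.eventually_lt (continuousAt_sub_snd_div_fst hq a.2) ha]
    with p hp using max_eq_right hp.le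

lemma weaklyIncomparable_sup_mem_line_of_pushX_eq (hq : 0 < q) (hst : s ≠ t)
    (hs : (s.2 - r) / q ≤ s.1) (ht : t.1 ≤ (t.2 - r) / q) (h : pushX q r s = pushX q r t) :
    WeaklyIncomparable s t ∧ s ⊔ t ∈ line q r := by
  rw [pushX, pushX, max_eq_left hs, max_eq_right ht] at h
  have ht2 : t.2 = q * s.1 + r := by rw [h]; field_simp; ring
  have hs2 : s.2 ≤ t.2 := by rw [ht2]; linarith [(div_le_iff₀' hq).mp hs]
  have ht1 : t.1 ≤ s.1 := h ▸ ht
  refine ⟨weaklyIncomparable_of_le_of_le hst ht1 hs2, ?_⟩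
  change max s.2 t.2 = q * max s.1 t.1 + r
  rw [max_eq_right hs2, max_eq_left ht1, ht2]

lemma fst_eq_or_snd_eq_of_pushX_eq (hq : 0 < q) (hst : s ≠ t)
    (hA : WeaklyIncomparable s t → s ⊔ t ∉ line q r) (h : pushX q r s = pushX q r t) :
    (s.1 = t.1 ∧ (s.2 - r) / q < s.1 ∧ (t.2 - r) / q < t.1) ∨
      (s.2 = t.2 ∧ s.1 < (s.2 - r) / q ∧ t.1 < (t.2 - r) / q) := by
  have hst' : ¬((s.2 - r) / q ≤ s.1 ∧ t.1 ≤ (t.2 - r) / q) := fun ⟨hs, ht⟩ =>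
    let ⟨hw, hmem⟩ := weaklyIncomparable_sup_mem_line_of_pushX_eq hq hst hs ht h
    hA hw hmem
  have hts' : ¬((t.2 - r) / q ≤ t.1 ∧ s.1 ≤ (s.2 - r) / q) := fun ⟨ht, hs⟩ =>
    let ⟨hw, hmem⟩ := weaklyIncomparable_sup_mem_line_of_pushX_eq hq hst.symm ht hs h.symm
    hA hw.symm (sup_comm s t ▸ hmem)
  rcases lt_trichotomy ((s.2 - r) / q) s.1 with hs | hs | hs
  · have ht : (t.2 - r) / q < t.1 := lt_of_not_ge fun ht => hst' ⟨hs.le, ht⟩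
    rw [pushX, pushX, max_eq_left hs.le, max_eq_left ht.le] at h
    exact .inl ⟨h, hs, ht⟩
  · rcases le_total t.1 ((t.2 - r) / q) with ht | ht
    exacts [absurd ⟨hs.le, ht⟩ hst', absurd ⟨ht, hs.ge⟩ hts']
  · have ht : t.1 < (t.2 - r) / q := lt_of_not_ge fun ht => hts' ⟨ht, hs.le⟩
    rw [pushX, pushX, max_eq_right hs.le, max_eq_right ht.le, div_left_inj' hq.ne',
      sub_left_inj] at h
    exact .inr ⟨h, hs, ht⟩

lemma eventually_pushX_le_iff (hq : 0 < q) (hA : WeaklyIncomparable s t → s ⊔ t ∉ line q r) :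
    ∀ᶠ p : ℝ × ℝ in 𝓝 (q, r),
      (pushX q r s ≤ pushX q r t ↔ pushX p.1 p.2 s ≤ pushX p.1 p.2 t) := by
  refine eventually_le_iff_of_continuousAt (f := fun p : ℝ × ℝ => pushX p.1 p.2 s)
    (continuousAt_pushX hq.ne' s) (continuousAt_pushX hq.ne' t) fun h => ?_
  rcases eq_or_ne s t with rfl | hst
  · exact .of_forall fun _ => rfl
  rcases fst_eq_or_snd_eq_of_pushX_eq hq hst hA h with ⟨h1, hs, ht⟩ | ⟨h2, hs, ht⟩
  · filter_upwards [eventually_pushX_eq_fst hq.ne' hs, eventually_pushX_eq_fst hq.ne' ht]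
      with p hps hpt
    rw [hps, hpt, h1]
  · filter_upwards [eventually_pushX_eq_div hq.ne' hs, eventually_pushX_eq_div hq.ne' ht]
      with p hps hpt
    rw [hps, hpt, h2]

end pushX

/-- If the line `ℓ(q,r)` (with `q > 0`) contains no anchor of the finite set
`S ⊆ ℝ²`, then for all sufficiently small perturbations `ℓ(q',r')` of the line, the order
in which the elements of `S` push onto the line is unchanged. -/
theorem push_order_locally_constant (S : Finset (ℝ × ℝ)) (q r : ℝ) (hq : 0 < q)
    (push : ℝ → ℝ → ℝ × ℝ → ℝ × ℝ)
    (hpush : ∀ q' r' : ℝ, 0 < q' → ∀ x : ℝ × ℝ,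
      IsLeast {b ∈ line q' r' | x ≤ b} (push q' r' x))
    (hno : ∀ α : ℝ × ℝ, IsAnchor S α → α ∉ line q r) :
    ∃ ε > 0, ∀ q' r' : ℝ, 0 < q' → |q' - q| < ε → |r' - r| < ε →
      ∀ s ∈ S, ∀ t ∈ S, (push q r s ≤ push q r t ↔ push q' r' s ≤ push q' r' t) := by
  have hall : ∀ᶠ p : ℝ × ℝ in 𝓝 (q, r), ∀ s ∈ S, ∀ t ∈ S,
      (pushX q r s ≤ pushX q r t ↔ pushX p.1 p.2 s ≤ pushX p.1 p.2 t) :=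
    (eventually_all_finset S).2 fun s hs => (eventually_all_finset S).2 fun t ht =>
      eventually_pushX_le_iff hq fun hw => hno _ ⟨s, hs, t, ht, hw, rfl⟩
  obtain ⟨ε, hε, hball⟩ := Metric.eventually_nhds_iff.mp hall
  refine ⟨ε, hε, fun q' r' hq' hq'q hr'r s hs t ht => ?_⟩
  have hdist : dist (q', r') (q, r) < ε := by
    rw [Prod.dist_eq, Real.dist_eq, Real.dist_eq]
    exact max_lt hq'q hr'r
  rw [push_le_push_iff hq (hpush q r hq s) (hpush q r hq t),
    push_le_push_iff hq' (hpush q' r' hq' s) (hpush q' r' hq' t)]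
  exact hball hdist s hs t ht
end

section
/- Let S ⊆ ℝ² be finite, and let γ : [0,1] → (0,∞) × ℝ be a continuous path, writing γ(τ) = (q_τ, r_τ), such that for every τ ∈ [0,1] the line ℓ(q_τ, r_τ) contains no anchor of S. Then for all s, t ∈ S: push_{ℓ(q_0,r_0)}(s) ≤ push_{ℓ(q_0,r_0)}(t) if and only if push_{ℓ(q_1,r_1)}(s) ≤ push_{ℓ(q_1,r_1)}(t) (where ≤ is the product order, which is total on each line). In particular, the totally ordered partition of S into level sets of the push map is the same at γ(0) and γ(1). -/
/-!
Writing `L(x) = q x + r`, the push of `x` onto `ℓ(q, r)` is the point of the line at height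
`max (L x₁) x₂`, so pushes compare as these heights do. For `a = s ⊔ t` strictly below the line
the heights of `s` and `t` compare as `s₁` and `t₁`, and for `a` strictly above it as `s₂` and
`t₂`. If `s, t` are weakly incomparable, `a` is an anchor, so by the intermediate value theorem
it stays on one side of the lines along the path; otherwise `s ≤ t` or `t` is strictly below `s`
in both coordinates, and the comparison does not depend on the line at all.
-/

open Function

def pushHeight {α β : Type*} [LinearOrder α] [LinearOrder β] (f : α → β) (x : α × β) : β :=
  max (f x.1) x.2

section PushHeight

variable {α β : Type*} [LinearOrder α] [LinearOrder β] {f : α → β}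

theorem le_graph_iff_pushHeight_le (hf : StrictMono f) (x : α × β) (b : α) :
    x ≤ (b, f b) ↔ pushHeight f x ≤ f b := by
  simp only [Prod.le_def, pushHeight, max_le_iff, hf.le_iff_le]

theorem IsLeast.snd_eq_pushHeight (hf : StrictMono f) (hsurj : Surjective f) {x c : α × β}
    (hc : IsLeast {b | b.2 = f b.1 ∧ x ≤ b} c) : c.2 = pushHeight f x := by
  obtain ⟨⟨hc_graph, hxc⟩, hc_least⟩ := hc
  obtain ⟨b, hb⟩ := hsurj (pushHeight f x)
  apply le_antisymm
  · have hcb : c ≤ (b, f b) := hc_least ⟨rfl, (le_graph_iff_pushHeight_le hf x b).2 hb.ge⟩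
    exact hb ▸ hcb.2
  · rw [show c = (c.1, f c.1) from Prod.ext rfl hc_graph] at hxc
    exact hc_graph ▸ (le_graph_iff_pushHeight_le hf x c.1).1 hxc

theorem le_iff_pushHeight_le_of_isLeast (hf : StrictMono f) (hsurj : Surjective f)
    {s t c d : α × β} (hc : IsLeast {b | b.2 = f b.1 ∧ s ≤ b} c)
    (hd : IsLeast {b | b.2 = f b.1 ∧ t ≤ b} d) :
    c ≤ d ↔ pushHeight f s ≤ pushHeight f t := by
  have hd_graph : d = (d.1, f d.1) := Prod.ext rfl hd.1.1
  calc c ≤ d ↔ s ≤ d := ⟨hc.1.2.trans, fun h => hc.2 ⟨hd.1.1, h⟩⟩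
    _ ↔ pushHeight f s ≤ f d.1 := by
      rw [hd_graph]; exact le_graph_iff_pushHeight_le hf s d.1
    _ ↔ pushHeight f s ≤ pushHeight f t := by rw [← hd.1.1, hd.snd_eq_pushHeight hf hsurj]

theorem pushHeight_mono (hf : Monotone f) : Monotone (pushHeight f) :=
  fun _ _ h => max_le_max (hf h.1) h.2

theorem pushHeight_lt_pushHeight (hf : StrictMono f) {x y : α × β} (h₁ : x.1 < y.1)
    (h₂ : x.2 < y.2) : pushHeight f x < pushHeight f y :=
  max_lt_max (hf h₁) h₂

theorem pushHeight_le_pushHeight_iff_of_lt (hf : StrictMono f) {s t : α × β}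
    (h : (s ⊔ t).2 < f (s ⊔ t).1) : pushHeight f s ≤ pushHeight f t ↔ s.1 ≤ t.1 := by
  rw [Prod.fst_sup, Prod.snd_sup, sup_lt_iff] at h
  constructor
  · intro hle
    by_contra! hts
    rw [sup_eq_left.2 hts.le] at h
    exact hle.not_gt ((max_lt (hf hts) h.2).trans_le (le_max_left _ _))
  · intro hst
    rw [sup_eq_right.2 hst] at h
    exact max_le (hf.monotone hst) h.1.le |>.trans (le_max_left _ _)

theorem pushHeight_le_pushHeight_iff_of_gt (hf : Monotone f) {s t : α × β}
    (h : f (s ⊔ t).1 < (s ⊔ t).2) : pushHeight f s ≤ pushHeight f t ↔ s.2 ≤ t.2 := by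
  rw [Prod.fst_sup, Prod.snd_sup] at h
  constructor
  · intro hle
    by_contra! hts
    rw [sup_eq_left.2 hts.le] at h
    have ht : f t.1 < s.2 := (hf le_sup_right).trans_lt h
    exact hle.not_gt ((max_lt ht hts).trans_le (le_max_right _ _))
  · intro hst
    rw [sup_eq_right.2 hst] at h
    exact max_le ((hf le_sup_left).trans h.le) hst |>.trans (le_max_right _ _)

end PushHeight

theorem le_or_lt_lt_of_not_weaklyIncomparable {s t : ℝ × ℝ} (h : ¬ WeaklyIncomparable s t) :
    s ≤ t ∨ (t.1 < s.1 ∧ t.2 < s.2) := by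
  unfold WeaklyIncomparable at h
  by_cases hst : s = t
  · exact Or.inl hst.le
  push Not at h
  obtain ⟨hcomp, h₁, h₂⟩ := h hst
  by_cases hle : s ≤ t
  · exact Or.inl hle
  · have hts := hcomp hle
    exact Or.inr ⟨lt_of_le_of_ne hts.1 (Ne.symm h₁), lt_of_le_of_ne hts.2 (Ne.symm h₂)⟩

theorem pushHeight_le_pushHeight_iff_of_not_weaklyIncomparable {f : ℝ → ℝ} (hf : StrictMono f)
    {s t : ℝ × ℝ} (h : ¬ WeaklyIncomparable s t) : pushHeight f s ≤ pushHeight f t ↔ s ≤ t := by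
  rcases le_or_lt_lt_of_not_weaklyIncomparable h with hst | ⟨h₁, h₂⟩
  · exact iff_of_true (pushHeight_mono hf.monotone hst) hst
  · exact iff_of_false (pushHeight_lt_pushHeight hf h₁ h₂).not_ge fun hst => h₁.not_ge hst.1

theorem IsPreconnected.lt_iff_lt_of_ne {X α : Type*} [TopologicalSpace X] [LinearOrder α]
    [TopologicalSpace α] [OrderClosedTopology α] {s : Set X} (hs : IsPreconnected s) {g : X → α}
    (hg : ContinuousOn g s) {c : α} (hne : ∀ x ∈ s, g x ≠ c) {a b : X} (ha : a ∈ s)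
    (hb : b ∈ s) : c < g a ↔ c < g b := by
  have key : ∀ {a b}, a ∈ s → b ∈ s → c < g a → c < g b := by
    intro a b ha hb hca
    by_contra! hbc
    obtain ⟨x, hx, hgx⟩ := hs.intermediate_value hb ha hg ⟨hbc, hca.le⟩
    exact hne x hx hgx
  exact ⟨key ha hb, key hb ha⟩

theorem strictMono_affine {q : ℝ} (hq : 0 < q) (r : ℝ) : StrictMono fun x => q * x + r :=
  (strictMono_mul_left_of_pos hq).add_const r

theorem surjective_affine {q : ℝ} (hq : 0 < q) (r : ℝ) : Surjective fun x => q * x + r :=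
  fun y => ⟨(y - r) / q, by field_simp; ring⟩

/-- Along a continuous path `γ : [0,1] → (0,∞) × ℝ` of (parameters of) lines,
none of which contains an anchor of the finite set `S ⊆ ℝ²`, the order in which the
elements of `S` push onto the corresponding lines is the same at `γ(0)` and `γ(1)`. -/
theorem push_order_constant_along_path (S : Finset (ℝ × ℝ)) (γ : ℝ → ℝ × ℝ)
    (hγ : ContinuousOn γ (Set.Icc 0 1))
    (hpos : ∀ τ ∈ Set.Icc (0:ℝ) 1, 0 < (γ τ).1)
    (hno : ∀ τ ∈ Set.Icc (0:ℝ) 1, ∀ α : ℝ × ℝ, IsAnchor S α → α ∉ line (γ τ).1 (γ τ).2)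
    (push : ℝ × ℝ → ℝ × ℝ → ℝ × ℝ)
    (hpush : ∀ p : ℝ × ℝ, 0 < p.1 → ∀ x : ℝ × ℝ,
      IsLeast {b ∈ line p.1 p.2 | x ≤ b} (push p x)) :
    ∀ s ∈ S, ∀ t ∈ S,
      (push (γ 0) s ≤ push (γ 0) t ↔ push (γ 1) s ≤ push (γ 1) t) := by
  intro s hs t ht
  set L : ℝ → ℝ → ℝ := fun τ x => (γ τ).1 * x + (γ τ).2
  have hL : ∀ τ ∈ Set.Icc (0:ℝ) 1, StrictMono (L τ) := fun τ hτ => strictMono_affine (hpos τ hτ) _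
  have hpush_le : ∀ τ ∈ Set.Icc (0:ℝ) 1,
      (push (γ τ) s ≤ push (γ τ) t ↔ pushHeight (L τ) s ≤ pushHeight (L τ) t) := fun τ hτ =>
    le_iff_pushHeight_le_of_isLeast (hL τ hτ) (surjective_affine (hpos τ hτ) _)
      (hpush _ (hpos τ hτ) s) (hpush _ (hpos τ hτ) t)
  have h0 : (0:ℝ) ∈ Set.Icc (0:ℝ) 1 := ⟨le_rfl, zero_le_one⟩
  have h1 : (1:ℝ) ∈ Set.Icc (0:ℝ) 1 := ⟨zero_le_one, le_rfl⟩
  rw [hpush_le 0 h0, hpush_le 1 h1]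
  by_cases hst : WeaklyIncomparable s t
  · set a := s ⊔ t
    have hside : ∀ τ ∈ Set.Icc (0:ℝ) 1, L τ a.1 ≠ a.2 := fun τ hτ h =>
      hno τ hτ a ⟨s, hs, t, ht, hst, rfl⟩ h.symm
    have hsign := isPreconnected_Icc.lt_iff_lt_of_ne
      ((hγ.fst.mul continuousOn_const).add hγ.snd) hside h0 h1
    by_cases hbelow : a.2 < L 0 a.1
    · rw [pushHeight_le_pushHeight_iff_of_lt (hL 0 h0) hbelow,
        pushHeight_le_pushHeight_iff_of_lt (hL 1 h1) (hsign.1 hbelow)]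
    · have habove (τ) (hτ : τ ∈ Set.Icc (0:ℝ) 1) (hτ' : ¬ a.2 < L τ a.1) : L τ a.1 < a.2 :=
        lt_of_le_of_ne (not_lt.1 hτ') (hside τ hτ)
      rw [pushHeight_le_pushHeight_iff_of_gt (hL 0 h0).monotone (habove 0 h0 hbelow),
        pushHeight_le_pushHeight_iff_of_gt (hL 1 h1).monotone
          (habove 1 h1 (mt hsign.2 hbelow))]
  · rw [pushHeight_le_pushHeight_iff_of_not_weaklyIncomparable (hL 0 h0) hst,
      pushHeight_le_pushHeight_iff_of_not_weaklyIncomparable (hL 1 h1) hst]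
end

section
/- Let K be a field and let A be an m × n matrix over K. Then there exist an m × n matrix R over K and an invertible upper-triangular n × n matrix U over K such that A = R·U and R is reduced, i.e., for any two distinct indices j ≠ j' of nonzero columns of R, the largest row index of a nonzero entry of column j differs from the largest row index of a nonzero entry of column j'. -/
/-- A matrix `R` is reduced if for every pair of distinct nonzero columns, the maximal row
indices of their nonzero entries are distinct. -/
def Matrix.Reduced {K : Type} [Field K] {m n : ℕ} (R : Matrix (Fin m) (Fin n) K) : Prop :=
  ∀ (j j' : Fin n) (i i' : Fin m), j ≠ j' →
    IsGreatest {k : Fin m | R k j ≠ 0} i → IsGreatest {k : Fin m | R k j' ≠ 0} i' → i ≠ i'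

/-!
Column operations `col j' ← col j' + c · col j` with `j < j'` are right multiplications by
upper-triangular unipotent matrices. Whenever two columns `j < j'` have their bottom-most
nonzero entry in the same row `i`, a suitable such operation clears row `i` of column `j'` and
so strictly lowers its pivot. The sum of the pivot heights therefore decreases until the
matrix is reduced, and the inverses of the operations used multiply to the factor `U`.
-/

namespace Matrix

section ColHeight

variable {α ι : Type*} [Zero α] {m : ℕ}

open Classical in
/-- One more than the largest row index of a nonzero entry of column `j`; `0` if the column
vanishes. -/
noncomputable def colHeight (A : Matrix (Fin m) ι α) (j : ι) : ℕ :=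
  (Finset.univ.filter fun i => A i j ≠ 0).sup fun i => (i : ℕ) + 1

theorem colHeight_le_iff {A : Matrix (Fin m) ι α} {j : ι} {k : ℕ} :
    A.colHeight j ≤ k ↔ ∀ i, A i j ≠ 0 → (i : ℕ) < k := by
  simp [colHeight, Finset.sup_le_iff]

theorem lt_colHeight {A : Matrix (Fin m) ι α} {i : Fin m} {j : ι} (h : A i j ≠ 0) :
    (i : ℕ) < A.colHeight j :=
  lt_of_not_ge fun hle => lt_irrefl _ (colHeight_le_iff.mp hle i h)

theorem colHeight_congr {A B : Matrix (Fin m) ι α} {j : ι} (h : ∀ i, A i j = B i j) :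
    A.colHeight j = B.colHeight j := by
  unfold colHeight
  congr 1
  ext i
  simp [h i]

variable [Fintype ι]

noncomputable def colHeightSum (A : Matrix (Fin m) ι α) : ℕ :=
  ∑ j, A.colHeight j

theorem colHeightSum_lt_of_colHeight_lt {A B : Matrix (Fin m) ι α} (j : ι)
    (hcol : ∀ i b, b ≠ j → B i b = A i b) (hj : B.colHeight j < A.colHeight j) :
    B.colHeightSum < A.colHeightSum := by
  refine Finset.sum_lt_sum (fun b _ => ?_) ⟨j, Finset.mem_univ _, hj⟩
  by_cases hb : b = j
  · exact hb ▸ hj.le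
  · exact (colHeight_congr (hcol · b hb)).le

end ColHeight

section Reduction

variable {K : Type} [Field K] {m n : ℕ}

theorem exists_pivot_clash_of_not_reduced {A : Matrix (Fin m) (Fin n) K} (hA : ¬A.Reduced) :
    ∃ (j j' : Fin n) (i : Fin m), j < j' ∧
      IsGreatest {k | A k j ≠ 0} i ∧ IsGreatest {k | A k j' ≠ 0} i := by
  simp only [Reduced, not_forall, not_ne_iff] at hA
  obtain ⟨j, j', i, _, hjj', hj, hj', rfl⟩ := hA
  rcases hjj'.lt_or_gt with hlt | hlt
  exacts [⟨j, j', i, hlt, hj, hj'⟩, ⟨j', j, i, hlt, hj', hj⟩]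

theorem colHeight_mul_transvection_lt {A : Matrix (Fin m) (Fin n) K} {j j' : Fin n}
    {i : Fin m} (hj : IsGreatest {k | A k j ≠ 0} i)
    (hj' : IsGreatest {k | A k j' ≠ 0} i) :
    (A * transvection j j' (-(A i j' / A i j))).colHeight j' < A.colHeight j' := by
  have hpiv : A i j ≠ 0 := hj.1
  have hcleared : (A * transvection j j' (-(A i j' / A i j))).colHeight j' ≤ i := by
    refine colHeight_le_iff.mpr fun k hk => ?_
    by_contra! hik
    replace hik : i ≤ k := hik
    apply hk
    rw [mul_transvection_apply_same]
    rcases hik.eq_or_lt with rfl | hik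
    · field_simp
      ring
    · have hkj : A k j = 0 := by_contra fun h => hik.not_ge (hj.2 h)
      have hkj' : A k j' = 0 := by_contra fun h => hik.not_ge (hj'.2 h)
      simp [hkj, hkj']
  exact hcleared.trans_lt (lt_colHeight hj'.1)

theorem exists_mul_colHeightSum_lt_of_not_reduced {A : Matrix (Fin m) (Fin n) K}
    (hA : ¬A.Reduced) :
    ∃ (B : Matrix (Fin m) (Fin n) K) (V : Matrix (Fin n) (Fin n) K),
      A = B * V ∧ B.colHeightSum < A.colHeightSum ∧ V.BlockTriangular id ∧ IsUnit V := by
  obtain ⟨j, j', i, hlt, hj, hj'⟩ := exists_pivot_clash_of_not_reduced hA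
  set c := -(A i j' / A i j)
  refine ⟨A * transvection j j' c, transvection j j' (-c), ?_, ?_,
    blockTriangular_transvection hlt.le _, ?_⟩
  · rw [Matrix.mul_assoc, transvection_mul_transvection_same j j' hlt.ne, add_neg_cancel,
      transvection_zero, Matrix.mul_one]
  · exact colHeightSum_lt_of_colHeight_lt j'
      (fun k b hb => mul_transvection_apply_of_ne j j' k b hb c A)
      (colHeight_mul_transvection_lt hj hj')
  · rw [isUnit_iff_isUnit_det, det_transvection_of_ne _ _ hlt.ne]
    exact isUnit_one

end Reduction

end Matrix

/-- Every `m × n` matrix `A` over a field admits an `RU`-decomposition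
`A = R·U` with `R` reduced and `U` invertible and upper triangular. -/
theorem exists_RU_decomposition {K : Type} [Field K] {m n : ℕ}
    (A : Matrix (Fin m) (Fin n) K) :
    ∃ (R : Matrix (Fin m) (Fin n) K) (U : Matrix (Fin n) (Fin n) K),
      A = R * U ∧ R.Reduced ∧ U.BlockTriangular id ∧ IsUnit U := by
  induction hN : A.colHeightSum using Nat.strong_induction_on generalizing A with
  | _ N ih =>
    by_cases hA : A.Reduced
    · exact ⟨A, 1, (Matrix.mul_one A).symm, hA, Matrix.blockTriangular_one, isUnit_one⟩
    obtain ⟨B, V, rfl, hB, hV, hVunit⟩ := Matrix.exists_mul_colHeightSum_lt_of_not_reduced hA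
    obtain ⟨R, U, rfl, hR, hU, hUunit⟩ := ih _ (hN ▸ hB) B rfl
    exact ⟨R, U * V, Matrix.mul_assoc R U V, hR, hU.mul hV, hUunit.mul hVunit⟩
end

section
/- Let K be a field, and let η : F → F' be a natural transformation of functors from the poset ℝ² (product order) to K-vector spaces, where F = ⊕_{i=1}^{n} K^⟨pᵢ⟩ and F' = ⊕_{j=1}^{n'} K^⟨p'ⱼ⟩ are finitely generated free bipersistence modules. Let M = coker η, and let S = {p₁,…,pₙ} ∪ {p'₁,…,p'_{n'}}. If a ≤ b in ℝ² and {s ∈ S : s ≤ a} = {s ∈ S : s ≤ b}, then the structure map M_{a,b} : M_a → M_b is an isomorphism. -/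
/-!
If no generator grade of `F` or `F'` lies in `b` without lying in `a`, then `F_a = F_b` and
`F'_a = F'_b` as subspaces of `K^n` and `K^{n'}`, so the structure maps of `F` and `F'` are
bijective inclusions. A map of cokernels induced by a commuting square whose source map is onto
and whose target map is bijective is itself bijective.
-/

/-- The free bipersistence module `⊕ᵢ K^⟨pᵢ⟩` at the grade `a ∈ ℝ²`: the space of tuples
`(cᵢ)` with `cᵢ ∈ K^⟨pᵢ⟩_a`, i.e. functions `Fin n → K` supported on `{i | pᵢ ≤ a}`
(recall `K^⟨p⟩_a = K` if `p ≤ a` and `0` otherwise). -/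
def freeAt (K : Type) [Field K] {n : ℕ} (p : Fin n → ℝ × ℝ) (a : ℝ × ℝ) :
    Submodule K (Fin n → K) where
  carrier := {f | ∀ i, ¬ p i ≤ a → f i = 0}
  zero_mem' := fun _ _ => rfl
  add_mem' := by
    intro f g hf hg i hi
    simp [hf i hi, hg i hi]
  smul_mem' := by
    intro c f hf i hi
    simp [hf i hi]

/-- The supports are monotone in the grade, giving the structure maps
(inclusions) of a free bipersistence module. -/
theorem freeAt_mono (K : Type) [Field K] {n : ℕ} (p : Fin n → ℝ × ℝ) {a b : ℝ × ℝ}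
    (hab : a ≤ b) : freeAt K p a ≤ freeAt K p b := by
  intro f hf i hi
  exact hf i fun h => hi (h.trans hab)

theorem freeAt_anti_of_le_imp (K : Type) [Field K] {n : ℕ} (p : Fin n → ℝ × ℝ) {a b : ℝ × ℝ}
    (h : ∀ i, p i ≤ b → p i ≤ a) : freeAt K p b ≤ freeAt K p a :=
  fun _ hf i hi => hf i fun hb => hi (h i hb)

theorem Submodule.inclusion_bijective_of_le {R M : Type*} [Ring R] [AddCommGroup M] [Module R M]
    {P Q : Submodule R M} (hPQ : P ≤ Q) (hQP : Q ≤ P) :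
    Function.Bijective (Submodule.inclusion hPQ) :=
  ⟨Submodule.inclusion_injective hPQ, fun y => ⟨⟨y, hQP y.2⟩, rfl⟩⟩

section CokernelMap

variable {R N M N' M' : Type*} [Ring R] [AddCommGroup N] [Module R N] [AddCommGroup M]
  [Module R M] [AddCommGroup N'] [Module R N'] [AddCommGroup M'] [Module R M']
  {f : N →ₗ[R] M} {f' : N' →ₗ[R] M'} {i : N →ₗ[R] N'} {j : M →ₗ[R] M'}
  {ψ : (M ⧸ LinearMap.range f) →ₗ[R] (M' ⧸ LinearMap.range f')}

theorem cokernel_map_injective (hcomm : ∀ x, f' (i x) = j (f x))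
    (hi : Function.Surjective i) (hj : Function.Injective j)
    (hψ : ∀ x, ψ (Submodule.Quotient.mk x) = Submodule.Quotient.mk (j x)) :
    Function.Injective ψ := by
  rw [← LinearMap.ker_eq_bot, eq_bot_iff]
  intro q hq
  obtain ⟨x, rfl⟩ := Submodule.Quotient.mk_surjective _ q
  rw [LinearMap.mem_ker, hψ, Submodule.Quotient.mk_eq_zero] at hq
  obtain ⟨y', hy'⟩ := hq
  obtain ⟨y, rfl⟩ := hi y'
  rw [Submodule.mem_bot, Submodule.Quotient.mk_eq_zero]
  exact ⟨y, hj (by rw [← hcomm, hy'])⟩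

theorem cokernel_map_surjective (hj : Function.Surjective j)
    (hψ : ∀ x, ψ (Submodule.Quotient.mk x) = Submodule.Quotient.mk (j x)) :
    Function.Surjective ψ := by
  intro q
  obtain ⟨y, rfl⟩ := Submodule.Quotient.mk_surjective _ q
  obtain ⟨x, rfl⟩ := hj y
  exact ⟨Submodule.Quotient.mk x, hψ x⟩

end CokernelMap

/-- Let `η : F → F'` be a natural transformation of finitely generated free
bipersistence modules, `F = ⊕ᵢ K^⟨pᵢ⟩` and `F' = ⊕ⱼ K^⟨p'ⱼ⟩`, and let `M = coker η`,
computed pointwise: `M_a = F'_a / im(η_a)`.  Let `S` be the union of the grades `pᵢ` and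
`p'ⱼ`.  If `a ≤ b` and `{s ∈ S : s ≤ a} = {s ∈ S : s ≤ b}`, then the induced structure map
`M_{a,b} : M_a → M_b` (i.e. any linear map commuting with the quotient projections and the
structure map of `F'`) is an isomorphism. -/
theorem coker_structure_map_iso (K : Type) [Field K] {n n' : ℕ}
    (p : Fin n → ℝ × ℝ) (p' : Fin n' → ℝ × ℝ)
    (η : ∀ a : ℝ × ℝ, freeAt K p a →ₗ[K] freeAt K p' a)
    (hnat : ∀ (a b : ℝ × ℝ) (hab : a ≤ b) (x : freeAt K p a),
      η b (Submodule.inclusion (freeAt_mono K p hab) x) =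
        Submodule.inclusion (freeAt_mono K p' hab) (η a x))
    (a b : ℝ × ℝ) (hab : a ≤ b)
    (hS : ∀ s : ℝ × ℝ, ((∃ i, p i = s) ∨ (∃ j, p' j = s)) → (s ≤ a ↔ s ≤ b))
    (ψ : (freeAt K p' a ⧸ LinearMap.range (η a)) →ₗ[K]
      (freeAt K p' b ⧸ LinearMap.range (η b)))
    (hψ : ∀ x : freeAt K p' a,
      ψ (Submodule.Quotient.mk x) =
        Submodule.Quotient.mk (Submodule.inclusion (freeAt_mono K p' hab) x)) :
    Function.Bijective ψ := by
  have hF := Submodule.inclusion_bijective_of_le (freeAt_mono K p hab)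
    (freeAt_anti_of_le_imp K p fun i => (hS (p i) (.inl ⟨i, rfl⟩)).mpr)
  have hF' := Submodule.inclusion_bijective_of_le (freeAt_mono K p' hab)
    (freeAt_anti_of_le_imp K p' fun j => (hS (p' j) (.inr ⟨j, rfl⟩)).mpr)
  exact ⟨cokernel_map_injective (hnat a b hab) hF.surjective hF'.injective hψ,
    cokernel_map_surjective hF'.surjective hψ⟩
end

section
/- Let K be a field, T a finite linear order, U a linear order, and G : T → U monotone; extend G to Ĝ : T ∪ {∞} → U ∪ {∞} (adjoining a top element to each order) by Ĝ(∞) = ∞. Let N : T → Vect_K be a finite direct sum of interval modules, N ≅ ⊕_{i=1}^{n} I[sᵢ, tᵢ), with sᵢ ∈ T and tᵢ ∈ T ∪ {∞}, sᵢ < tᵢ. Then the pointwise left Kan extension of N along G satisfies Lan_G N ≅ ⊕_{i : Ĝ(sᵢ) < Ĝ(tᵢ)} I[G(sᵢ), Ĝ(tᵢ)), the direct sum of interval modules over those indices i for which Ĝ(sᵢ) < Ĝ(tᵢ). -/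
open CategoryTheory CategoryTheory.Limits

def intervalSumCarrier (K : Type) [Field K] {V ι : Type} [LinearOrder V]
    (s : ι → V) (t : ι → WithTop V) (x : V) : Submodule K (ι → K) where
  carrier := {f | ∀ i, ¬ (s i ≤ x ∧ (x : WithTop V) < t i) → f i = 0}
  zero_mem' := fun _ _ => rfl
  add_mem' := by
    intro f g hf hg i hi
    simp [hf i hi, hg i hi]
  smul_mem' := by
    intro c f hf i hi
    simp [hf i hi]

def intervalSumMap (K : Type) [Field K] {V ι : Type} [LinearOrder V]
    (s : ι → V) (t : ι → WithTop V) {x y : V} (h : x ≤ y) :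
    intervalSumCarrier K s t x →ₗ[K] intervalSumCarrier K s t y where
  toFun f :=
    ⟨fun i => if (y : WithTop V) < t i then f.1 i else 0, by
      intro i hi
      by_cases hy : (y : WithTop V) < t i
      · simp only [if_pos hy]
        exact f.2 i fun hx => (hi ⟨hx.1.trans h, hy⟩).elim
      · simp [hy]⟩
  map_add' f g := by
    apply Subtype.ext
    funext i
    by_cases hy : (y : WithTop V) < t i <;> simp [hy]
  map_smul' c f := by
    apply Subtype.ext
    funext i
    by_cases hy : (y : WithTop V) < t i <;> simp [hy]

theorem intervalSumMap_apply (K : Type) [Field K] {V ι : Type} [LinearOrder V]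
    (s : ι → V) (t : ι → WithTop V) {x y : V} (h : x ≤ y)
    (f : intervalSumCarrier K s t x) (i : ι) :
    (intervalSumMap K s t h f).1 i = if (y : WithTop V) < t i then f.1 i else 0 := rfl

def intervalSum (K : Type) [Field K] {V ι : Type} [LinearOrder V]
    (s : ι → V) (t : ι → WithTop V) : V ⥤ ModuleCat K where
  obj x := ModuleCat.of K (intervalSumCarrier K s t x)
  map {x y} h := ModuleCat.ofHom (intervalSumMap K s t (leOfHom h))
  map_id x := by
    apply ModuleCat.hom_ext
    apply LinearMap.ext
    intro f
    apply Subtype.ext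
    funext i
    show (if (x : WithTop V) < t i then f.1 i else 0) = f.1 i
    by_cases hx : (x : WithTop V) < t i
    · simp [hx]
    · rw [if_neg hx]
      exact (f.2 i fun hc => hx hc.2).symm
  map_comp {x y z} h h' := by
    apply ModuleCat.hom_ext
    apply LinearMap.ext
    intro f
    apply Subtype.ext
    funext i
    show (if (z : WithTop V) < t i then f.1 i else 0)
        = (if (z : WithTop V) < t i then (if (y : WithTop V) < t i then f.1 i else 0) else 0)
    by_cases hz : (z : WithTop V) < t i
    · have hy : (y : WithTop V) < t i :=
        lt_of_le_of_lt (WithTop.coe_le_coe.mpr (leOfHom h')) hz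
      simp [hz, hy]
    · simp [hz]

/-!
For finite `T`, the indexing category of the colimit computing `(Lan_G N)(u)`, i.e. the `x` with
`G x ≤ u`, is either empty or has a terminal object, the greatest such `x`, call it `a`. So
`(Lan_G N)(u)` is `0` in the first case and `N(a)` in the second. Since `a < t ↔ u < Ĝ t`, a bar
`[s, t)` is alive at `a` exactly when `[G s, Ĝ t)` is alive at `u`.
-/

section Order

variable {α β : Type*} [LinearOrder α]

theorem Monotone.coe_lt_of_coe_lt_map [Preorder β] {f : α → β} (hf : Monotone f)
    {a : α} {b : WithTop α} (h : (f a : WithTop β) < b.map f) : (a : WithTop α) < b := by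
  cases b with
  | top => exact WithTop.coe_lt_top a
  | coe b => exact WithTop.coe_lt_coe.mpr (hf.reflect_lt (WithTop.coe_lt_coe.mp h))

variable [LinearOrder β] {f : α → β}

theorem IsGreatest.coe_lt_iff_coe_lt_map (hf : Monotone f) {u : β} {a : α}
    (ha : IsGreatest {x | f x ≤ u} a) (b : WithTop α) :
    (a : WithTop α) < b ↔ (u : WithTop β) < b.map f := by
  refine ⟨fun h => ?_, fun h =>
    hf.coe_lt_of_coe_lt_map (lt_of_le_of_lt (WithTop.coe_le_coe.mpr ha.1) h)⟩
  cases b with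
  | top => exact WithTop.coe_lt_top u
  | coe b =>
    exact WithTop.coe_lt_coe.mpr (not_le.mp fun hb => (WithTop.coe_lt_coe.mp h).not_ge (ha.2 hb))

theorem IsGreatest.le_and_coe_lt_iff (hf : Monotone f) {u : β} {a : α}
    (ha : IsGreatest {x | f x ≤ u} a) (c : α) (b : WithTop α) :
    c ≤ a ∧ (a : WithTop α) < b ↔ f c ≤ u ∧ (u : WithTop β) < b.map f :=
  ⟨fun h => ⟨(hf h.1).trans ha.1, (ha.coe_lt_iff_coe_lt_map hf b).mp h.2⟩,
    fun h => ⟨ha.2 h.1, (ha.coe_lt_iff_coe_lt_map hf b).mpr h.2⟩⟩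

end Order

section CostructuredArrow

variable {α β : Type*} [Preorder α] [Preorder β] {f : α → β} (hf : Monotone f) {u : β}

def Monotone.isTerminalCostructuredArrowMk {a : α} (ha : IsGreatest {x | f x ≤ u} a) :
    IsTerminal (CostructuredArrow.mk (homOfLE ha.1 : hf.functor.obj a ⟶ u)) :=
  IsTerminal.ofUniqueHom
    (fun j => CostructuredArrow.homMk (homOfLE (ha.2 (leOfHom j.hom))) (Subsingleton.elim _ _))
    (fun _ _ => CostructuredArrow.hom_ext _ _ (Subsingleton.elim _ _))

theorem Monotone.isEmpty_costructuredArrow (h : ∀ x, ¬ f x ≤ u) :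
    IsEmpty (CostructuredArrow hf.functor u) :=
  ⟨fun j => h j.left (leOfHom j.hom)⟩

end CostructuredArrow

noncomputable def CategoryTheory.Limits.IsColimit.ofIsTerminalOfIsIso {J C : Type*}
    [Category J] [Category C] {F : J ⥤ C} (c : Cocone F) {X : J} (hX : IsTerminal X)
    [IsIso (c.ι.app X)] : IsColimit c :=
  IsColimit.ofIsoColimit (colimitOfDiagramTerminal hX F)
    (Cocone.ext (asIso (c.ι.app X)) fun j => by simp)

theorem isZero_intervalSum_obj (K : Type) [Field K] {V ι : Type} [LinearOrder V]
    (s : ι → V) (t : ι → WithTop V) {x : V} (h : ∀ i, ¬ s i ≤ x) :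
    IsZero ((intervalSum K s t).obj x) :=
  have : Subsingleton ((intervalSum K s t).obj x) :=
    ⟨fun f g => Subtype.ext <| funext fun i =>
      (f.2 i fun hi => h i hi.1).trans (g.2 i fun hi => h i hi.1).symm⟩
  ModuleCat.isZero_of_subsingleton _

section IntervalSum

variable (K : Type) [Field K] {T U ι : Type} [LinearOrder T] [LinearOrder U]
  (G : T →o U) (s : ι → T) (t : ι → WithTop T)

abbrev intervalSumPushforward : U ⥤ ModuleCat K :=
  intervalSum K (ι := {i : ι // ((G (s i) : U) : WithTop U) < (t i).map G})
    (fun i => G (s i.1)) (fun i => (t i.1).map G)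

def intervalSumPushforwardUnitApp (x : T) :
    (intervalSum K s t).obj x ⟶ (intervalSumPushforward K G s t).obj (G x) :=
  ModuleCat.ofHom
    { toFun := fun f =>
        ⟨fun i => if ((G x : U) : WithTop U) < (t i.1).map G then f.1 i.1 else 0, by
          intro i hi
          dsimp only
          split_ifs with hx
          · exact f.2 i.1 fun hf => hi ⟨G.monotone hf.1, hx⟩
          · rfl⟩
      map_add' := fun f g => by
        ext i
        simp only [Submodule.coe_add, Pi.add_apply]
        split_ifs <;> simp
      map_smul' := fun c f => by
        ext i
        simp only [Submodule.coe_smul, Pi.smul_apply]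
        split_ifs <;> simp }

def intervalSumPushforwardUnit :
    intervalSum K s t ⟶ G.monotone.functor ⋙ intervalSumPushforward K G s t where
  app := intervalSumPushforwardUnitApp K G s t
  naturality x y h := by
    ext f : 2
    apply Subtype.ext
    funext i
    show (if ((G y : U) : WithTop U) < (t i.1).map G then
        (if (y : WithTop T) < t i.1 then f.1 i.1 else 0) else 0) =
      (if ((G y : U) : WithTop U) < (t i.1).map G then
        (if ((G x : U) : WithTop U) < (t i.1).map G then f.1 i.1 else 0) else 0)
    by_cases hGy : ((G y : U) : WithTop U) < (t i.1).map G
    · have hGx : ((G x : U) : WithTop U) < (t i.1).map G :=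
        lt_of_le_of_lt (WithTop.coe_le_coe.mpr (G.monotone (leOfHom h))) hGy
      simp [hGy, hGx, G.monotone.coe_lt_of_coe_lt_map hGy]
    · simp [hGy]

variable {K G s t} in
theorem intervalSumPushforwardUnitApp_comp_map_apply {u : U} {a : T}
    (ha : IsGreatest {x | G x ≤ u} a) (f : (intervalSum K s t).obj a) (i) :
    ((intervalSumPushforwardUnitApp K G s t a ≫
      (intervalSumPushforward K G s t).map (homOfLE ha.1)) f).1 i = f.1 i.1 := by
  show (if (u : WithTop U) < (t i.1).map G then
      (if ((G a : U) : WithTop U) < (t i.1).map G then f.1 i.1 else 0) else 0) = f.1 i.1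
  by_cases hu : (u : WithTop U) < (t i.1).map G
  · have hGa : ((G a : U) : WithTop U) < (t i.1).map G :=
      lt_of_le_of_lt (WithTop.coe_le_coe.mpr ha.1) hu
    simp [hu, hGa]
  · rw [if_neg hu]
    exact (f.2 i.1 fun hf => hu ((ha.coe_lt_iff_coe_lt_map G.monotone _).mp hf.2)).symm

variable {K G s t} in
theorem bijective_intervalSumPushforwardUnitApp_comp_map {u : U} {a : T}
    (ha : IsGreatest {x | G x ≤ u} a) :
    Function.Bijective (intervalSumPushforwardUnitApp K G s t a ≫
      (intervalSumPushforward K G s t).map (homOfLE ha.1)) := by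
  have hmem := ha.le_and_coe_lt_iff G.monotone
  have hsupp : ∀ j, s j ≤ a ∧ (a : WithTop T) < t j →
      ((G (s j) : U) : WithTop U) < (t j).map G := fun j hj =>
    lt_of_le_of_lt (WithTop.coe_le_coe.mpr ((hmem _ _).mp hj).1) ((hmem _ _).mp hj).2
  constructor
  · intro f g hfg
    refine Subtype.ext <| funext fun j => ?_
    by_cases hj : s j ≤ a ∧ (a : WithTop T) < t j
    · have := congrArg (fun h => h.1 ⟨j, hsupp j hj⟩) hfg
      rwa [intervalSumPushforwardUnitApp_comp_map_apply ha,
        intervalSumPushforwardUnitApp_comp_map_apply ha] at this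
    · exact (f.2 j hj).trans (g.2 j hj).symm
  · intro g
    refine ⟨⟨fun j => if h : ((G (s j) : U) : WithTop U) < (t j).map G
      then g.1 ⟨j, h⟩ else 0, fun j hj => ?_⟩, ?_⟩
    · rw [hmem] at hj
      dsimp only
      split_ifs with h
      · exact g.2 ⟨j, h⟩ hj
      · rfl
    · refine Subtype.ext <| funext fun i => ?_
      exact (intervalSumPushforwardUnitApp_comp_map_apply ha _ i).trans (dif_pos i.2)

def intervalSumPushforwardLeftExtension :
    Functor.LeftExtension G.monotone.functor (intervalSum K s t) :=
  .mk _ (intervalSumPushforwardUnit K G s t)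

theorem nonempty_isPointwiseLeftKanExtensionAt_intervalSumPushforward [Finite T] (u : U) :
    Nonempty ((intervalSumPushforwardLeftExtension K G s t).IsPointwiseLeftKanExtensionAt u) := by
  by_cases hu : ∃ x, G x ≤ u
  · obtain ⟨a, ha, hmax⟩ := Set.exists_max_image {x | G x ≤ u} id (Set.toFinite _) hu
    have hgreatest : IsGreatest {x | G x ≤ u} a := ⟨ha, hmax⟩
    have : IsIso (((intervalSumPushforwardLeftExtension K G s t).coconeAt u).ι.app
        (CostructuredArrow.mk (homOfLE hgreatest.1))) :=
      (ConcreteCategory.isIso_iff_bijective _).mpr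
        (bijective_intervalSumPushforwardUnitApp_comp_map hgreatest)
    exact ⟨IsColimit.ofIsTerminalOfIsIso _ (G.monotone.isTerminalCostructuredArrowMk hgreatest)⟩
  · simp only [not_exists, not_le] at hu
    have := G.monotone.isEmpty_costructuredArrow fun x => (hu x).not_ge
    have hzero : IsZero ((intervalSumPushforward K G s t).obj u) :=
      isZero_intervalSum_obj K _ _ fun i => (hu (s i.1)).not_ge
    exact ⟨(isColimitEquivIsInitialOfIsEmpty _ _).symm hzero.isInitial⟩

theorem intervalSumPushforward_isLeftKanExtension [Finite T] :
    (intervalSumPushforward K G s t).IsLeftKanExtension (intervalSumPushforwardUnit K G s t) :=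
  Functor.LeftExtension.IsPointwiseLeftKanExtension.isLeftKanExtension fun u =>
    (nonempty_isPointwiseLeftKanExtensionAt_intervalSumPushforward K G s t u).some

end IntervalSum

theorem pointwiseLeftKanExtension_intervalSum_general
    {K T U : Type} [Field K] [LinearOrder T] [Fintype T] [LinearOrder U]
    (G : T →o U) (n : ℕ) (s : Fin n → T) (t : Fin n → WithTop T)
    (N : T ⥤ ModuleCat K) (hN : Nonempty (N ≅ intervalSum K s t)) :
    Nonempty (G.monotone.functor.pointwiseLeftKanExtension N ≅
      intervalSum K (ι := {i : Fin n // ((G (s i) : U) : WithTop U) < (t i).map G})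
        (fun i => G (s i.1)) (fun i => (t i.1).map G)) := by
  obtain ⟨e⟩ := hN
  have := intervalSumPushforward_isLeftKanExtension K G s t
  exact ⟨Functor.leftKanExtensionUniqueOfIso _
    (G.monotone.functor.pointwiseLeftKanExtensionUnit N) e _ (intervalSumPushforwardUnit K G s t)⟩

set_option synthInstance.maxHeartbeats 1000000 in
/-- Let `T` be a finite linear order, `U` a linear order, `G : T → U`
monotone, extended to `Ĝ : T ∪ {∞} → U ∪ {∞}` by `Ĝ(∞) = ∞`.  If
`N : T ⥤ Vect_K` is a finite direct sum of interval modules, `N ≅ ⊕ᵢ I[sᵢ, tᵢ)` with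
`sᵢ < tᵢ`, then the pointwise left Kan extension of `N` along `G` is isomorphic to the
direct sum of the interval modules `I[G(sᵢ), Ĝ(tᵢ))` over those indices `i` with
`Ĝ(sᵢ) < Ĝ(tᵢ)`. -/
theorem pointwiseLeftKanExtension_intervalSum
    {K T U : Type} [Field K] [LinearOrder T] [Fintype T] [LinearOrder U]
    (G : T →o U) (n : ℕ) (s : Fin n → T) (t : Fin n → WithTop T)
    (hst : ∀ i, (s i : WithTop T) < t i)
    (N : T ⥤ ModuleCat K) (hN : Nonempty (N ≅ intervalSum K s t)) :
    Nonempty (G.monotone.functor.pointwiseLeftKanExtension N ≅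
      intervalSum K (ι := {i : Fin n // ((G (s i) : U) : WithTop U) < (t i).map G})
        (fun i => G (s i.1)) (fun i => (t i.1).map G)) :=
  pointwiseLeftKanExtension_intervalSum_general G n s t N hN
end

section
/- Let K be a field, m, n ∈ ℕ, and p₁,…,pₘ, q₁,…,qₙ ∈ ℝ². If the functors ⊕_{i=1}^{m} K^⟨pᵢ⟩ and ⊕_{j=1}^{n} K^⟨qⱼ⟩ from the poset ℝ² (product order) to K-vector spaces are naturally isomorphic, then m = n and the multiset {p₁,…,pₘ} equals the multiset {q₁,…,qₙ}. In particular, the function β^F : ℝ² → ℕ recording, for a finitely generated free bipersistence module F, the multiplicity of each grade, is independent of the chosen decomposition of F. -/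
namespace Multiset

variable {α : Type*} [PartialOrder α] [DecidableEq α] [DecidableLE α]

theorem card_filter_le_eq_count {M : Multiset α} {x : α} (hx : ∀ y ∈ M, y ≤ x → y = x) :
    card (M.filter (· ≤ x)) = count x M := by
  rw [count_eq_card_filter_eq]
  congr 1
  exact filter_congr fun y hy => ⟨fun hyx => (hx y hy hyx).symm, fun hxy => hxy ▸ le_rfl⟩

theorem eq_of_forall_card_filter_le_eq {M N : Multiset α}
    (h : ∀ a, card (M.filter (· ≤ a)) = card (N.filter (· ≤ a))) : M = N := by
  induction M using strongInductionOn generalizing N with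
  | ih M ih =>
    obtain hMN | ⟨x, hx⟩ := (M + N).toFinset.eq_empty_or_nonempty
    · obtain ⟨rfl, rfl⟩ := add_eq_zero.1 (toFinset_eq_empty.1 hMN)
      rfl
    obtain ⟨x, hxMN, hmin⟩ := Finset.exists_minimal ⟨x, hx⟩
    have hx_min : ∀ L ≤ M + N, ∀ y ∈ L, y ≤ x → y = x := fun L hL y hy hyx =>
      hyx.antisymm (hmin (mem_toFinset.2 (mem_of_le hL hy)) hyx)
    have hcount : count x M = count x N := by
      rw [← card_filter_le_eq_count (hx_min M (le_add_right M N)),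
        ← card_filter_le_eq_count (hx_min N (le_add_left N M)), h]
    have hxN : x ∈ N := by
      rw [mem_toFinset, ← count_pos, count_add, hcount] at hxMN
      exact count_pos.1 (by omega)
    have hxM : x ∈ M := count_pos.1 (hcount ▸ count_pos.2 hxN)
    rw [← cons_erase hxM, ← cons_erase hxN, ih _ (erase_lt.2 hxM) fun a => ?_]
    have ha := h a
    rw [← cons_erase hxM, ← cons_erase hxN, filter_cons, filter_cons, card_add, card_add] at ha
    exact Nat.add_left_cancel ha

end Multiset

theorem freeAt_eq_spanSubset (K : Type) [Field K] {n : ℕ} (p : Fin n → ℝ × ℝ) (a : ℝ × ℝ) :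
    freeAt K p a = Pi.spanSubset K {i | p i ≤ a} := by
  ext f
  simp only [Pi.mem_spanSubset_iff, Set.mem_ofPred_eq]
  rfl

theorem finrank_freeAt (K : Type) [Field K] {n : ℕ} (p : Fin n → ℝ × ℝ) (a : ℝ × ℝ) :
    Module.finrank K (freeAt K p a) =
      Multiset.card ((List.ofFn p : Multiset (ℝ × ℝ)).filter (· ≤ a)) := by
  classical
  rw [freeAt_eq_spanSubset, Pi.dim_spanSubset, ← Fin.univ_val_map, Multiset.filter_map,
    Multiset.card_map, Set.ncard_eq_toFinset_card', Set.toFinset_ofPred]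
  rfl

theorem free_grades_unique_general (K : Type) [Field K] {m n : ℕ}
    (p : Fin m → ℝ × ℝ) (q : Fin n → ℝ × ℝ)
    (e : ∀ a : ℝ × ℝ, freeAt K p a ≃ₗ[K] freeAt K q a) :
    m = n ∧ (↑(List.ofFn p) : Multiset (ℝ × ℝ)) = ↑(List.ofFn q) := by
  have hgrades : (↑(List.ofFn p) : Multiset (ℝ × ℝ)) = ↑(List.ofFn q) :=
    Multiset.eq_of_forall_card_filter_le_eq fun a => by
      rw [← finrank_freeAt K p, ← finrank_freeAt K q, (e a).finrank_eq]
  exact ⟨by simpa using congrArg Multiset.card hgrades, hgrades⟩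

/-- If the finitely generated free bipersistence modules `⊕ᵢ K^⟨pᵢ⟩` and
`⊕ⱼ K^⟨qⱼ⟩` are naturally isomorphic (i.e. there is a family of linear equivalences of
the fibers commuting with the structure maps), then `m = n` and the multisets of grades
`{p₁,…,pₘ}` and `{q₁,…,qₙ}` coincide.  In particular the Betti-number function `β^F` of a
finitely generated free bipersistence module is independent of the chosen decomposition. -/
theorem free_grades_unique (K : Type) [Field K] {m n : ℕ}
    (p : Fin m → ℝ × ℝ) (q : Fin n → ℝ × ℝ)
    (e : ∀ a : ℝ × ℝ, freeAt K p a ≃ₗ[K] freeAt K q a)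
    (hnat : ∀ (a b : ℝ × ℝ) (hab : a ≤ b) (x : freeAt K p a),
      e b (Submodule.inclusion (freeAt_mono K p hab) x) =
        Submodule.inclusion (freeAt_mono K q hab) (e a x)) :
    m = n ∧ (↑(List.ofFn p) : Multiset (ℝ × ℝ)) = ↑(List.ofFn q) :=
  free_grades_unique_general K p q e
end
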